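/- Among all extensions of a partition Γ* of {1,...,n}, the simple extension has the strictly smallest sum of unCD distances to the other extensions of Γ*, unless Γ* has exactly one block or the relevant block is a singleton with k=1; in general, the simple extension's sum n is less than or equal to the sum (k−1)|S_{l'}|+n of any complex extension. -/

import Mathlib

open Finset

/-- `i` and `j` lie in the same block of the partition `Γ`. -/
def samePart {n : ℕ} (Γ : Finpartition (univ : Finset (Fin n))) (i j : Fin n) : Prop :=
  ∃ S ∈ Γ.parts, i ∈ S ∧ j ∈ S

open scoped Classical in
/-- Unnormalized Cluster Difference between two partitions of `{1,…,n}`. -/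
noncomputable def unCD {n : ℕ} (Γ₁ Γ₂ : Finpartition (univ : Finset (Fin n))) : ℕ :=
  ((univ : Finset (Fin n × Fin n)).filter
    (fun p => p.1 < p.2 ∧ ¬ (samePart Γ₁ p.1 p.2 ↔ samePart Γ₂ p.1 p.2))).card

/-- `Γ` is the simple extension of `Γs`: blocks of `Γs` (reindexed) plus the singleton `{n+1}`. -/
def IsSimpleExt {n : ℕ} (Γs : Finpartition (univ : Finset (Fin n)))
    (Γ : Finpartition (univ : Finset (Fin (n + 1)))) : Prop :=
  Γ.parts = insert {Fin.last n} (Γs.parts.image (fun S => S.image Fin.castSucc))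

/-- `Γ` is the complex extension of `Γs` along its block `S`:
the element `n+1` is added to the block `S`. -/
def IsComplexExt {n : ℕ} (Γs : Finpartition (univ : Finset (Fin n))) (S : Finset (Fin n))
    (Γ : Finpartition (univ : Finset (Fin (n + 1)))) : Prop :=
  S ∈ Γs.parts ∧
    Γ.parts = insert (insert (Fin.last n) (S.image Fin.castSucc))
      ((Γs.parts.erase S).image (fun T => T.image Fin.castSucc))

/-- `Γ` is an extension of `Γs` (equivalently, `Γs` is the reduct of `Γ`). -/
def IsExt {n : ℕ} (Γs : Finpartition (univ : Finset (Fin n)))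
    (Γ : Finpartition (univ : Finset (Fin (n + 1)))) : Prop :=
  IsSimpleExt Γs Γ ∨ ∃ S, IsComplexExt Γs S Γ

noncomputable instance {n : ℕ} : Fintype (Finpartition (univ : Finset (Fin n))) :=
  Fintype.ofInjective Finpartition.parts (fun _ _ h => Finpartition.ext h)

noncomputable instance {n : ℕ} : DecidableEq (Finpartition (univ : Finset (Fin n))) :=
  Classical.decEq _

/-!
Every extension of `Γ*` induces `Γ*` on `{1,…,n}`, so two extensions can only disagree on pairs
`(i, n+1)`, and their unCD is the size of the symmetric difference of the sets of companions of
`n+1`: these are `∅` for the simple extension and `S_l` for the complex extension `Γ_l`. Hence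
`Γ₀` is at distance `|S_l|` from `Γ_l`, which sums to `n`, while `Γ_{l'}` is at distance
`|S_{l'}| + |S_l|` from `Γ_l` for `l ≠ l'`, which sums to `n + (k - 1)|S_{l'}|`.
-/

open scoped symmDiff

variable {n : ℕ}

namespace Finpartition

open scoped Classical in
noncomputable def companionsOfLast (Γ : Finpartition (univ : Finset (Fin (n + 1)))) :
    Finset (Fin n) :=
  univ.filter fun i => samePart Γ i.castSucc (Fin.last n)

theorem unCD_eq_card_symmDiff_companionsOfLast
    {Γ₁ Γ₂ : Finpartition (univ : Finset (Fin (n + 1)))} (H : ∀ i j : Fin n,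
      samePart Γ₁ i.castSucc j.castSucc ↔ samePart Γ₂ i.castSucc j.castSucc) :
    unCD Γ₁ Γ₂ = #(companionsOfLast Γ₁ ∆ companionsOfLast Γ₂) := by
  have hinj : Function.Injective fun i : Fin n => (i.castSucc, Fin.last n) :=
    fun i j h => Fin.castSucc_injective n (congrArg Prod.fst h)
  rw [unCD, ← card_image_of_injective _ hinj]
  congr 1
  ext ⟨a, b⟩
  simp only [mem_filter, mem_univ, true_and, mem_image, mem_symmDiff, companionsOfLast,
    Prod.mk.injEq]
  induction b using Fin.lastCases with
  | last =>
    induction a using Fin.lastCases with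
    | last => simp
    | cast i =>
      simp only [Fin.castSucc_lt_last, true_and, Fin.castSucc_inj, and_true, exists_eq_right]
      tauto
  | cast j =>
    induction a using Fin.lastCases with
    | last => simp [(Fin.castSucc_lt_last j).not_gt]
    | cast i => simp [H i j, (Fin.castSucc_lt_last j).ne']

section AdjoinLast

variable {Γ : Finpartition (univ : Finset (Fin (n + 1)))} {A : Finset (Fin n)}
  {P : Finset (Finset (Fin n))}

theorem samePart_castSucc_iff_of_parts_eq
    (h : Γ.parts =
      insert (insert (Fin.last n) (A.image Fin.castSucc)) (P.image (image Fin.castSucc)))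
    (i j : Fin n) :
    samePart Γ i.castSucc j.castSucc ↔ (i ∈ A ∧ j ∈ A) ∨ ∃ T ∈ P, i ∈ T ∧ j ∈ T := by
  simp [samePart, h, (Fin.castSucc_lt_last _).ne]

theorem companionsOfLast_eq_of_parts_eq
    (h : Γ.parts =
      insert (insert (Fin.last n) (A.image Fin.castSucc)) (P.image (image Fin.castSucc))) :
    companionsOfLast Γ = A := by
  ext i
  simp [companionsOfLast, samePart, h, (Fin.castSucc_lt_last _).ne]

end AdjoinLast

end Finpartition

variable {Γs : Finpartition (univ : Finset (Fin n))}
  {Γ₀ Γ Γ' : Finpartition (univ : Finset (Fin (n + 1)))} {S S' : Finset (Fin n)}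

theorem unCD_comm (Γ₁ Γ₂ : Finpartition (univ : Finset (Fin n))) : unCD Γ₁ Γ₂ = unCD Γ₂ Γ₁ := by
  rw [unCD, unCD]
  congr 1
  ext p
  simp only [mem_filter, iff_comm]

namespace IsSimpleExt

theorem parts_eq_insert_insert_last (h : IsSimpleExt Γs Γ₀) :
    Γ₀.parts = insert (insert (Fin.last n) ((∅ : Finset (Fin n)).image Fin.castSucc))
      (Γs.parts.image (image Fin.castSucc)) := by
  rw [h, image_empty, insert_empty]

theorem samePart_castSucc_iff (h : IsSimpleExt Γs Γ₀) (i j : Fin n) :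
    samePart Γ₀ i.castSucc j.castSucc ↔ samePart Γs i j := by
  rw [Finpartition.samePart_castSucc_iff_of_parts_eq h.parts_eq_insert_insert_last, samePart]
  simp

theorem companionsOfLast_eq (h : IsSimpleExt Γs Γ₀) : Γ₀.companionsOfLast = ∅ :=
  Finpartition.companionsOfLast_eq_of_parts_eq h.parts_eq_insert_insert_last

end IsSimpleExt

namespace IsComplexExt

theorem samePart_castSucc_iff (h : IsComplexExt Γs S Γ) (i j : Fin n) :
    samePart Γ i.castSucc j.castSucc ↔ samePart Γs i j := by
  rw [Finpartition.samePart_castSucc_iff_of_parts_eq h.2, samePart]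
  constructor
  · rintro (⟨hi, hj⟩ | ⟨T, hT, hi, hj⟩)
    exacts [⟨S, h.1, hi, hj⟩, ⟨T, mem_of_mem_erase hT, hi, hj⟩]
  · rintro ⟨T, hT, hi, hj⟩
    by_cases hTS : T = S
    · exact .inl (hTS ▸ ⟨hi, hj⟩)
    · exact .inr ⟨T, mem_erase.2 ⟨hTS, hT⟩, hi, hj⟩

theorem companionsOfLast_eq (h : IsComplexExt Γs S Γ) : Γ.companionsOfLast = S :=
  Finpartition.companionsOfLast_eq_of_parts_eq h.2

end IsComplexExt

theorem unCD_of_isSimpleExt_of_isComplexExt (h₀ : IsSimpleExt Γs Γ₀) (h : IsComplexExt Γs S Γ) :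
    unCD Γ₀ Γ = #S := by
  rw [Finpartition.unCD_eq_card_symmDiff_companionsOfLast fun i j =>
      (h₀.samePart_castSucc_iff i j).trans (h.samePart_castSucc_iff i j).symm,
    h₀.companionsOfLast_eq, h.companionsOfLast_eq]
  exact congrArg card (bot_symmDiff S)

theorem unCD_of_isComplexExt_of_isComplexExt (h : IsComplexExt Γs S Γ)
    (h' : IsComplexExt Γs S' Γ') (hSS' : S ≠ S') : unCD Γ Γ' = #S + #S' := by
  have hdisj : Disjoint S S' := Γs.disjoint h.1 h'.1 hSS'
  rw [Finpartition.unCD_eq_card_symmDiff_companionsOfLast fun i j =>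
      (h.samePart_castSucc_iff i j).trans (h'.samePart_castSucc_iff i j).symm,
    h.companionsOfLast_eq, h'.companionsOfLast_eq,
    symmDiff_eq_union hdisj, card_union_of_disjoint hdisj]

theorem sum_unCD_of_isSimpleExt (h₀ : IsSimpleExt Γs Γ₀)
    {E : Finset (Fin n) → Finpartition (univ : Finset (Fin (n + 1)))}
    (hE : ∀ S ∈ Γs.parts, IsComplexExt Γs S (E S)) :
    ∑ S ∈ Γs.parts, unCD Γ₀ (E S) = n := by
  rw [sum_congr rfl fun S hS => unCD_of_isSimpleExt_of_isComplexExt h₀ (hE S hS),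
    Γs.sum_card_parts, card_univ, Fintype.card_fin]

theorem unCD_add_sum_unCD_of_isComplexExt (h₀ : IsSimpleExt Γs Γ₀)
    {E : Finset (Fin n) → Finpartition (univ : Finset (Fin (n + 1)))}
    (hE : ∀ S ∈ Γs.parts, IsComplexExt Γs S (E S)) (hS' : S' ∈ Γs.parts) :
    unCD (E S') Γ₀ + ∑ S ∈ Γs.parts.erase S', unCD (E S') (E S) =
      n + (#Γs.parts - 1) * #S' := by
  have hsum : #S' + ∑ S ∈ Γs.parts.erase S', #S = n := by
    rw [add_sum_erase _ _ hS', Γs.sum_card_parts, card_univ, Fintype.card_fin]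
  rw [unCD_comm, unCD_of_isSimpleExt_of_isComplexExt h₀ (hE S' hS'),
    sum_congr rfl fun S hS => unCD_of_isComplexExt_of_isComplexExt (hE S' hS')
      (hE S (mem_of_mem_erase hS)) (ne_of_mem_erase hS).symm,
    sum_add_distrib, sum_const, smul_eq_mul, card_erase_of_mem hS']
  omega

theorem stmt9 {n : ℕ} {Γs : Finpartition (univ : Finset (Fin n))}
    {Γ₀ : Finpartition (univ : Finset (Fin (n + 1)))} (h₀ : IsSimpleExt Γs Γ₀)
    (E : Finset (Fin n) → Finpartition (univ : Finset (Fin (n + 1))))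
    (hE : ∀ S ∈ Γs.parts, IsComplexExt Γs S (E S))
    {S' : Finset (Fin n)} (hS' : S' ∈ Γs.parts) :
    (∑ S ∈ Γs.parts, unCD Γ₀ (E S)
        ≤ unCD (E S') Γ₀ + ∑ S ∈ Γs.parts.erase S', unCD (E S') (E S)) ∧
      (1 < Γs.parts.card →
        ∑ S ∈ Γs.parts, unCD Γ₀ (E S)
          < unCD (E S') Γ₀ + ∑ S ∈ Γs.parts.erase S', unCD (E S') (E S)) := by
  rw [sum_unCD_of_isSimpleExt h₀ hE, unCD_add_sum_unCD_of_isComplexExt h₀ hE hS']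
  refine ⟨Nat.le_add_right _ _, fun hk => Nat.lt_add_of_pos_right ?_⟩
  exact Nat.mul_pos (Nat.sub_pos_of_lt hk) (card_pos.2 (Γs.nonempty_of_mem_parts hS'))
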